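/- (Probit model constant γ_α.) Let σ > 0, α > 0, and f(x) = Φ(x/σ) where Φ is the standard normal cumulative distribution function. Then min( inf_{|x|≤α}{ f'(x)²/f(x)² − f''(x)/f(x) }, inf_{|x|≤α}{ f'(x)²/(1−f(x))² + f''(x)/(1−f(x)) } ) ≥ (α/(√(2π)·σ³))·exp(−α²/(2σ²)) > 0. -/

import Mathlib

/-!
Put `u = x / σ` and `a = α / σ`. Both expressions equal `(φ u ^ 2 + u φ u Φ u) / (σ ^ 2 Φ u ^ 2)`,
the second one at `-u` (as `1 - Φ u = Φ (-u)`), so it suffices that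
`a φ a Φ u ^ 2 ≤ φ u ^ 2 + u φ u Φ u` whenever `u ≤ a`. The function `t φ t` is at most
`φ 1 < 1/2` and decreases on `[1, ∞)`.
* For `u ≥ 1`, use `Φ u ≤ 1` and `a φ a ≤ u φ u`.
* For `0 ≤ u ≤ 1`, use `a φ a ≤ φ 1 ≤ φ u` and `Φ u ^ 2 ≤ φ u + u Φ u`: the difference of the two
  sides has derivative `Φ (1 - 2 φ) ≥ 0` and is positive at `0`.
* For `u ≤ 0`, put `t = -u` and `c = a φ a ≤ 1/2`. Mills' inequality `Φ (-t) ≤ φ t / t` makes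
  `φ t ^ 2 - t φ t Φ (-t) - c Φ (-t) ^ 2` decreasing on `[0, ∞)`, and it tends to `0`, so it is
  nonnegative.
-/

open MeasureTheory Real Set Filter Topology

noncomputable def stdNormalPDF (t : ℝ) : ℝ := Real.exp (-t ^ 2 / 2) / Real.sqrt (2 * Real.pi)

noncomputable def stdNormalCDF (x : ℝ) : ℝ := ∫ t in Iic x, stdNormalPDF t

lemma stdNormalPDF_pos (t : ℝ) : 0 < stdNormalPDF t := by unfold stdNormalPDF; positivity

lemma stdNormalPDF_neg (t : ℝ) : stdNormalPDF (-t) = stdNormalPDF t := by simp [stdNormalPDF]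

lemma stdNormalPDF_le_of_sq_le {s t : ℝ} (h : s ^ 2 ≤ t ^ 2) :
    stdNormalPDF t ≤ stdNormalPDF s := by
  unfold stdNormalPDF
  gcongr

lemma stdNormalPDF_zero : stdNormalPDF 0 = (Real.sqrt (2 * π))⁻¹ := by simp [stdNormalPDF]

lemma stdNormalPDF_lt_half (t : ℝ) : stdNormalPDF t < 1 / 2 := by
  refine (stdNormalPDF_le_of_sq_le (s := 0) (by simpa using sq_nonneg t)).trans_lt ?_
  rw [stdNormalPDF_zero, one_div, inv_lt_inv₀ (by positivity) two_pos, lt_sqrt zero_le_two]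
  nlinarith [pi_gt_three]

lemma quarter_lt_stdNormalPDF_zero : 1 / 4 < stdNormalPDF 0 := by
  rw [stdNormalPDF_zero, lt_inv_comm₀ (by norm_num) (by positivity), sqrt_lt' (by norm_num)]
  nlinarith [pi_lt_four]

lemma stdNormalPDF_eq_exp_neg_mul_sq (t : ℝ) :
    stdNormalPDF t = Real.exp (-(1 / 2) * t ^ 2) / Real.sqrt (2 * π) := by
  simp only [stdNormalPDF]; ring_nf

lemma integrable_stdNormalPDF : Integrable stdNormalPDF := by
  simp_rw [funext stdNormalPDF_eq_exp_neg_mul_sq]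
  exact (integrable_exp_neg_mul_sq (by norm_num : (0:ℝ) < 1/2)).div_const _

lemma integral_stdNormalPDF : ∫ t, stdNormalPDF t = 1 := by
  simp_rw [funext stdNormalPDF_eq_exp_neg_mul_sq]
  rw [integral_div, integral_gaussian, div_eq_one_iff_eq (by positivity)]
  congr 2; ring

lemma hasDerivAt_stdNormalPDF (t : ℝ) : HasDerivAt stdNormalPDF (-t * stdNormalPDF t) t := by
  have h : HasDerivAt (fun s : ℝ ↦ -s ^ 2 / 2) (-t) t :=
    ((hasDerivAt_pow 2 t).neg.div_const 2).congr_deriv (by push_cast; ring)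
  exact (h.exp.div_const _).congr_deriv (by unfold stdNormalPDF; ring)

lemma continuous_stdNormalPDF : Continuous stdNormalPDF := by unfold stdNormalPDF; fun_prop

lemma integrable_mul_stdNormalPDF : Integrable fun t ↦ t * stdNormalPDF t := by
  simp_rw [stdNormalPDF_eq_exp_neg_mul_sq, ← mul_div_assoc]
  exact (integrable_mul_exp_neg_mul_sq (by norm_num : (0:ℝ) < 1/2)).div_const _

lemma tendsto_stdNormalPDF_atTop : Tendsto stdNormalPDF atTop (𝓝 0) := by
  have h : Tendsto (fun t : ℝ ↦ -t ^ 2 / 2) atTop atBot :=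
    (tendsto_neg_atTop_atBot.comp (tendsto_pow_atTop two_ne_zero)).atBot_div_const two_pos
  have := (tendsto_exp_atBot.comp h).div_const (Real.sqrt (2 * π))
  rwa [zero_div] at this

lemma integral_Ioi_mul_stdNormalPDF (x : ℝ) :
    ∫ t in Ioi x, t * stdNormalPDF t = stdNormalPDF x := by
  have h := integral_Ioi_of_hasDerivAt_of_tendsto' (a := x) (f := fun t ↦ -stdNormalPDF t)
    (fun t _ ↦ (hasDerivAt_stdNormalPDF t).neg.congr_deriv (by ring))
    integrable_mul_stdNormalPDF.integrableOn (by simpa using tendsto_stdNormalPDF_atTop.neg)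
  simpa using h

lemma stdNormalCDF_neg_eq_integral_Ioi (x : ℝ) :
    stdNormalCDF (-x) = ∫ t in Ioi x, stdNormalPDF t := by
  rw [stdNormalCDF, ← integral_comp_neg_Ioi]
  simp_rw [stdNormalPDF_neg]

lemma stdNormalCDF_neg (x : ℝ) : stdNormalCDF (-x) = 1 - stdNormalCDF x := by
  rw [stdNormalCDF_neg_eq_integral_Ioi, stdNormalCDF, ← integral_stdNormalPDF,
    ← integral_add_compl measurableSet_Iic integrable_stdNormalPDF, compl_Iic, add_sub_cancel_left]

lemma stdNormalCDF_zero : stdNormalCDF 0 = 1 / 2 := by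
  linarith [neg_zero (G := ℝ) ▸ stdNormalCDF_neg 0]

lemma stdNormalCDF_sub (x y : ℝ) : stdNormalCDF y - stdNormalCDF x = ∫ t in x..y, stdNormalPDF t :=
  intervalIntegral.integral_Iic_sub_Iic integrable_stdNormalPDF.integrableOn
    integrable_stdNormalPDF.integrableOn

lemma stdNormalCDF_strictMono : StrictMono stdNormalCDF := fun x y hxy ↦ by
  have := intervalIntegral.intervalIntegral_pos_of_pos integrable_stdNormalPDF.intervalIntegrable
    stdNormalPDF_pos hxy
  linarith [stdNormalCDF_sub x y]

lemma stdNormalCDF_nonneg (x : ℝ) : 0 ≤ stdNormalCDF x :=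
  setIntegral_nonneg measurableSet_Iic fun t _ ↦ (stdNormalPDF_pos t).le

lemma stdNormalCDF_pos (x : ℝ) : 0 < stdNormalCDF x :=
  (stdNormalCDF_nonneg (x - 1)).trans_lt (stdNormalCDF_strictMono (by linarith))

lemma stdNormalCDF_lt_one (x : ℝ) : stdNormalCDF x < 1 := by
  linarith [stdNormalCDF_pos (-x), stdNormalCDF_neg x]

lemma hasDerivAt_stdNormalCDF (x : ℝ) : HasDerivAt stdNormalCDF (stdNormalPDF x) x := by
  have h : HasDerivAt (fun y ↦ ∫ t in (0:ℝ)..y, stdNormalPDF t) (stdNormalPDF x) x :=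
    intervalIntegral.integral_hasDerivAt_right integrable_stdNormalPDF.intervalIntegrable
      integrable_stdNormalPDF.aestronglyMeasurable.stronglyMeasurableAtFilter
      continuous_stdNormalPDF.continuousAt
  have e : stdNormalCDF = fun y ↦ stdNormalCDF 0 + ∫ t in (0:ℝ)..y, stdNormalPDF t := by
    ext y; rw [← stdNormalCDF_sub]; ring
  rw [e]
  exact h.const_add _

lemma stdNormalCDF_neg_le_div {t : ℝ} (ht : 0 < t) :
    stdNormalCDF (-t) ≤ stdNormalPDF t / t := by
  rw [stdNormalCDF_neg_eq_integral_Ioi, ← integral_Ioi_mul_stdNormalPDF, ← integral_div]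
  refine setIntegral_mono_on integrable_stdNormalPDF.integrableOn
    (integrable_mul_stdNormalPDF.div_const t).integrableOn measurableSet_Ioi fun s hs ↦ ?_
  rw [mul_div_right_comm]
  exact le_mul_of_one_le_left (stdNormalPDF_pos s).le ((one_le_div ht).2 (le_of_lt hs))

lemma hasDerivAt_stdNormalCDF_neg (t : ℝ) :
    HasDerivAt (fun s ↦ stdNormalCDF (-s)) (-stdNormalPDF t) t :=
  ((hasDerivAt_stdNormalCDF (-t)).comp t (hasDerivAt_neg t)).congr_deriv
    (by rw [stdNormalPDF_neg]; ring)

lemma tendsto_stdNormalCDF_neg_atTop : Tendsto (fun t ↦ stdNormalCDF (-t)) atTop (𝓝 0) := by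
  refine squeeze_zero' (.of_forall fun t ↦ stdNormalCDF_nonneg (-t)) ?_ tendsto_stdNormalPDF_atTop
  filter_upwards [eventually_ge_atTop 1] with t ht
  calc stdNormalCDF (-t) ≤ stdNormalPDF t / t := stdNormalCDF_neg_le_div (by linarith)
    _ ≤ stdNormalPDF t := div_le_self (stdNormalPDF_pos t).le ht

noncomputable def stdNormalTailGap (c t : ℝ) : ℝ :=
  stdNormalPDF t ^ 2 - t * stdNormalPDF t * stdNormalCDF (-t) - c * stdNormalCDF (-t) ^ 2

section TailGap

variable (c : ℝ)

lemma hasDerivAt_stdNormalTailGap (t : ℝ) :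
    HasDerivAt (stdNormalTailGap c)
      (stdNormalPDF t * ((t ^ 2 - 1 + 2 * c) * stdNormalCDF (-t) - t * stdNormalPDF t)) t := by
  have hφ := hasDerivAt_stdNormalPDF t
  have hΦ := hasDerivAt_stdNormalCDF_neg t
  exact (((hφ.pow 2).sub (((hasDerivAt_id' t).mul hφ).mul hΦ)).sub
    ((hΦ.pow 2).const_mul c)).congr_deriv (by simp only [Pi.mul_apply]; ring)

lemma tendsto_stdNormalTailGap_atTop :
    Tendsto (stdNormalTailGap c) atTop (𝓝 0) := by
  have hφ2 : Tendsto (fun s ↦ stdNormalPDF s ^ 2) atTop (𝓝 0) := by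
    simpa using tendsto_stdNormalPDF_atTop.pow 2
  -- Mills' ratio bounds the middle term by the first one.
  have hmid : Tendsto (fun s ↦ s * stdNormalPDF s * stdNormalCDF (-s)) atTop (𝓝 0) := by
    refine squeeze_zero' ?_ ?_ hφ2
    · filter_upwards [eventually_ge_atTop 0] with s hs
      have := stdNormalCDF_nonneg (-s)
      have := stdNormalPDF_pos s
      positivity
    · filter_upwards [eventually_gt_atTop 0] with s hs
      have h := (le_div_iff₀ hs).1 (stdNormalCDF_neg_le_div hs)
      nlinarith [stdNormalPDF_pos s]
  have := (hφ2.sub hmid).sub ((tendsto_stdNormalCDF_neg_atTop.pow 2).const_mul c)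
  rwa [sub_zero, zero_pow two_ne_zero, mul_zero, sub_zero] at this

variable {c}

lemma sq_sub_one_add_two_mul_mul_stdNormalCDF_neg_le (hc : c ≤ 1 / 2) {t : ℝ} (ht : 0 < t) :
    (t ^ 2 - 1 + 2 * c) * stdNormalCDF (-t) ≤ t * stdNormalPDF t := by
  have hφ := stdNormalPDF_pos t
  rcases le_or_gt (t ^ 2 - 1 + 2 * c) 0 with hneg | hpos
  · nlinarith [stdNormalCDF_nonneg (-t)]
  · calc (t ^ 2 - 1 + 2 * c) * stdNormalCDF (-t)
        ≤ (t ^ 2 - 1 + 2 * c) * (stdNormalPDF t / t) := by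
          gcongr; exact stdNormalCDF_neg_le_div ht
      _ = t * stdNormalPDF t - (1 - 2 * c) * (stdNormalPDF t / t) := by field_simp; ring
      _ ≤ t * stdNormalPDF t := by
          have : 0 ≤ (1 - 2 * c) * (stdNormalPDF t / t) := by
            have := div_pos hφ ht
            nlinarith
          linarith

lemma stdNormalTailGap_antitoneOn (hc : c ≤ 1 / 2) : AntitoneOn (stdNormalTailGap c) (Ici 0) := by
  refine antitoneOn_of_hasDerivWithinAt_nonpos (convex_Ici 0)
    (fun s _ ↦ (hasDerivAt_stdNormalTailGap c s).continuousAt.continuousWithinAt)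
    (fun s _ ↦ (hasDerivAt_stdNormalTailGap c s).hasDerivWithinAt) fun s hs ↦ ?_
  rw [interior_Ici] at hs
  exact mul_nonpos_of_nonneg_of_nonpos (stdNormalPDF_pos s).le
    (sub_nonpos.2 (sq_sub_one_add_two_mul_mul_stdNormalCDF_neg_le hc hs))

lemma stdNormalTailGap_nonneg (hc : c ≤ 1 / 2) {t : ℝ} (ht : 0 ≤ t) : 0 ≤ stdNormalTailGap c t :=
  le_of_tendsto (tendsto_stdNormalTailGap_atTop c) <| (eventually_ge_atTop t).mono fun _ hs ↦
    stdNormalTailGap_antitoneOn hc ht (ht.trans hs) hs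

end TailGap

lemma stdNormalCDF_sq_le {u : ℝ} (hu : 0 ≤ u) :
    stdNormalCDF u ^ 2 ≤ stdNormalPDF u + u * stdNormalCDF u := by
  have hderiv (t : ℝ) : HasDerivAt
      (fun s ↦ stdNormalPDF s + s * stdNormalCDF s - stdNormalCDF s ^ 2)
      (stdNormalCDF t * (1 - 2 * stdNormalPDF t)) t := by
    have hΦ := hasDerivAt_stdNormalCDF t
    exact (((hasDerivAt_stdNormalPDF t).add ((hasDerivAt_id' t).mul hΦ)).sub
      (hΦ.pow 2)).congr_deriv (by ring)
  have hmono := monotone_of_hasDerivAt_nonneg hderiv fun t ↦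
    mul_nonneg (stdNormalCDF_nonneg t) (by linarith [stdNormalPDF_lt_half t])
  have := hmono hu
  simp only [stdNormalCDF_zero, zero_mul, add_zero] at this
  linarith [quarter_lt_stdNormalPDF_zero]

lemma hasDerivAt_mul_stdNormalPDF (t : ℝ) :
    HasDerivAt (fun s ↦ s * stdNormalPDF s) ((1 - t ^ 2) * stdNormalPDF t) t :=
  ((hasDerivAt_id' t).mul (hasDerivAt_stdNormalPDF t)).congr_deriv (by ring)

lemma mul_stdNormalPDF_antitoneOn : AntitoneOn (fun s ↦ s * stdNormalPDF s) (Ici 1) := by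
  refine antitoneOn_of_hasDerivWithinAt_nonpos (convex_Ici 1)
    (fun s _ ↦ (hasDerivAt_mul_stdNormalPDF s).continuousAt.continuousWithinAt)
    (fun s _ ↦ (hasDerivAt_mul_stdNormalPDF s).hasDerivWithinAt) fun s hs ↦ ?_
  rw [interior_Ici, mem_Ioi] at hs
  exact mul_nonpos_of_nonpos_of_nonneg (by nlinarith) (stdNormalPDF_pos s).le

lemma mul_stdNormalPDF_monotoneOn : MonotoneOn (fun s ↦ s * stdNormalPDF s) (Icc (-1) 1) := by
  refine monotoneOn_of_hasDerivWithinAt_nonneg (convex_Icc (-1) 1)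
    (fun s _ ↦ (hasDerivAt_mul_stdNormalPDF s).continuousAt.continuousWithinAt)
    (fun s _ ↦ (hasDerivAt_mul_stdNormalPDF s).hasDerivWithinAt) fun s hs ↦ ?_
  rw [interior_Icc, mem_Ioo] at hs
  exact mul_nonneg (by nlinarith) (stdNormalPDF_pos s).le

lemma mul_stdNormalPDF_le (t : ℝ) : t * stdNormalPDF t ≤ stdNormalPDF 1 := by
  rcases le_total t 0 with ht | ht
  · exact (mul_nonpos_of_nonpos_of_nonneg ht (stdNormalPDF_pos t).le).trans
      (stdNormalPDF_pos 1).le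
  rcases le_total t 1 with ht1 | ht1
  · simpa using mul_stdNormalPDF_monotoneOn ⟨by linarith, ht1⟩ ⟨by norm_num, le_rfl⟩ ht1
  · simpa using mul_stdNormalPDF_antitoneOn self_mem_Ici ht1 ht1

lemma mul_stdNormalPDF_mul_stdNormalCDF_sq_le {a u : ℝ} (hua : u ≤ a) :
    a * stdNormalPDF a * stdNormalCDF u ^ 2 ≤
      stdNormalPDF u ^ 2 + u * stdNormalPDF u * stdNormalCDF u := by
  have hφ := stdNormalPDF_pos u
  have hmax := mul_stdNormalPDF_le a
  rcases le_total u 0 with hu | hu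
  · have := stdNormalTailGap_nonneg (hmax.trans (stdNormalPDF_lt_half 1).le) (neg_nonneg.2 hu)
    simp only [stdNormalTailGap, neg_neg, stdNormalPDF_neg] at this
    linarith
  rcases le_total u 1 with hu1 | hu1
  · have hφ1 : stdNormalPDF 1 ≤ stdNormalPDF u := stdNormalPDF_le_of_sq_le (by nlinarith)
    calc a * stdNormalPDF a * stdNormalCDF u ^ 2
        ≤ stdNormalPDF u * (stdNormalPDF u + u * stdNormalCDF u) :=
          mul_le_mul (hmax.trans hφ1) (stdNormalCDF_sq_le hu) (sq_nonneg _) hφ.le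
      _ = _ := by ring
  · have hmono : a * stdNormalPDF a ≤ u * stdNormalPDF u :=
      mul_stdNormalPDF_antitoneOn hu1 (hu1.trans hua) hua
    have hΦ1 : stdNormalCDF u ^ 2 ≤ stdNormalCDF u := by
      nlinarith [stdNormalCDF_lt_one u, stdNormalCDF_pos u]
    calc a * stdNormalPDF a * stdNormalCDF u ^ 2
        ≤ u * stdNormalPDF u * stdNormalCDF u :=
          mul_le_mul hmono hΦ1 (sq_nonneg _) (by positivity)
      _ ≤ _ := le_add_of_nonneg_left (sq_nonneg _)

lemma deriv_stdNormalCDF_comp_div (σ : ℝ) :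
    deriv (fun x ↦ stdNormalCDF (x / σ)) = fun x ↦ stdNormalPDF (x / σ) / σ := by
  ext x
  have h := (hasDerivAt_stdNormalCDF (x / σ)).comp x ((hasDerivAt_id' x).div_const σ)
  exact (h.congr_deriv (by ring)).deriv

lemma deriv_deriv_stdNormalCDF_comp_div (σ x : ℝ) :
    deriv (deriv fun x ↦ stdNormalCDF (x / σ)) x = -(x / σ) * stdNormalPDF (x / σ) / σ ^ 2 := by
  rw [deriv_stdNormalCDF_comp_div]
  have h := ((hasDerivAt_stdNormalPDF (x / σ)).comp x ((hasDerivAt_id' x).div_const σ)).div_const σ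
  exact (h.congr_deriv (by ring)).deriv

lemma mul_stdNormalPDF_div_sq_le {σ a u : ℝ} (hσ : 0 < σ) (hua : u ≤ a) :
    a * stdNormalPDF a / σ ^ 2 ≤
      (stdNormalPDF u / σ) ^ 2 / stdNormalCDF u ^ 2 -
        -u * stdNormalPDF u / σ ^ 2 / stdNormalCDF u := by
  have hΦ := stdNormalCDF_pos u
  calc a * stdNormalPDF a / σ ^ 2
      ≤ (stdNormalPDF u ^ 2 + u * stdNormalPDF u * stdNormalCDF u) / stdNormalCDF u ^ 2 /
          σ ^ 2 := by
        gcongr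
        rw [le_div_iff₀ (by positivity)]
        exact mul_stdNormalPDF_mul_stdNormalCDF_sq_le hua
    _ = _ := by field_simp; ring

/-- Probit model constant γ_α: for the probit link f(x) = Φ(x/σ) with Φ
the standard normal CDF, both curvature expressions are bounded below on |x| ≤ α by
(α/(√(2π)σ³))·exp(−α²/(2σ²)) > 0; hence so is their infimum over |x| ≤ α. -/
theorem one_bit_mc_probit_gamma_alpha
    (σ α : ℝ) (hσ : 0 < σ) (hα : 0 < α)
    (Φ f : ℝ → ℝ)
    (hΦ : ∀ x, Φ x = ∫ t in Set.Iic x, Real.exp (-t ^ 2 / 2) / Real.sqrt (2 * Real.pi))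
    (hf : ∀ x, f x = Φ (x / σ)) :
    (∀ x : ℝ, |x| ≤ α →
      α / (Real.sqrt (2 * Real.pi) * σ ^ 3) * Real.exp (-α ^ 2 / (2 * σ ^ 2)) ≤
        (deriv f x) ^ 2 / (f x) ^ 2 - deriv (deriv f) x / f x ∧
      α / (Real.sqrt (2 * Real.pi) * σ ^ 3) * Real.exp (-α ^ 2 / (2 * σ ^ 2)) ≤
        (deriv f x) ^ 2 / (1 - f x) ^ 2 + deriv (deriv f) x / (1 - f x)) ∧
    0 < α / (Real.sqrt (2 * Real.pi) * σ ^ 3) * Real.exp (-α ^ 2 / (2 * σ ^ 2)) := by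
  have hfΦ : f = fun x ↦ stdNormalCDF (x / σ) := funext fun x ↦ by rw [hf, hΦ]; rfl
  have hbound : α / (Real.sqrt (2 * Real.pi) * σ ^ 3) * Real.exp (-α ^ 2 / (2 * σ ^ 2)) =
      α / σ * stdNormalPDF (α / σ) / σ ^ 2 := by
    rw [stdNormalPDF, div_pow]; field_simp
  rw [hbound]
  refine ⟨fun x hx ↦ ?_, by have := stdNormalPDF_pos (α / σ); positivity⟩
  have hux : |x / σ| ≤ α / σ := by rw [abs_div, abs_of_pos hσ]; gcongr
  obtain ⟨hlo, hhi⟩ := abs_le.1 hux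
  rw [hfΦ, deriv_deriv_stdNormalCDF_comp_div, deriv_stdNormalCDF_comp_div, ← stdNormalCDF_neg]
  refine ⟨mul_stdNormalPDF_div_sq_le hσ hhi, ?_⟩
  convert mul_stdNormalPDF_div_sq_le hσ (neg_le.1 hlo) using 1
  rw [stdNormalPDF_neg]; ring
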